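/- Let l > 0, α > 0, ν ∈ ℝ with α + ν < 1, and 1 ≤ p ≤ ∞. Then the left-sided Laguerre fractional integral L_{0+}^α is a bounded operator from L_{ν,p}(0,l) to itself, with ‖L_{0+}^α f‖_{ν,p} ≤ C_+ l^α ‖f‖_{ν,p} for every f ∈ L_{ν,p}(0,l), where C_+ = (1/Γ(2α)) ∫₁^∞ (u−1)^{2α−1} u^{ν−1} F_α(1−u) du is finite. -/

import Mathlib

open MeasureTheory Set
open scoped ENNReal

noncomputable def Fg (a z : ℝ) : ℝ :=
  (Real.Gamma (2*a) / (Real.Gamma a)^2) *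
    ∫ t in (0:ℝ)..1, t^(a-1) * (1-t)^(a-1) * (1 - z*t)^(-a)

noncomputable def Lplus (a : ℝ) (f : ℝ → ℝ) (x : ℝ) : ℝ :=
  (Real.Gamma (2*a))⁻¹ *
    ∫ u in Set.Ioo (0:ℝ) x, (x-u)^(2*a-1) * u^(-a) * Fg a (1 - x/u) * f u

noncomputable def Lminus (a : ℝ) (f : ℝ → ℝ) (x : ℝ) : ℝ :=
  x^(-a) / Real.Gamma (2*a) *
    ∫ u in Set.Ioi x, (u-x)^(2*a-1) * Fg a (1 - u/x) * f u

noncomputable def mulHaar : Measure ℝ :=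
  (volume.restrict (Set.Ioi (0:ℝ))).withDensity fun x => ENNReal.ofReal x⁻¹

noncomputable def nuNorm (ν : ℝ) (p : ℝ≥0∞) (f : ℝ → ℝ) : ℝ≥0∞ :=
  eLpNorm (fun x => x ^ ν * f x) p mulHaar

def memLnu (ν : ℝ) (p : ℝ≥0∞) (f : ℝ → ℝ) : Prop :=
  MemLp (fun x => x ^ ν * f x) p mulHaar

noncomputable def mellinT (f : ℝ → ℝ) (s : ℂ) : ℂ :=
  ∫ x in Set.Ioi (0:ℝ), (f x : ℂ) * (x : ℂ) ^ (s - 1)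

noncomputable def thetaOp (g : ℝ → ℝ) : ℝ → ℝ := fun x => deriv (fun y => y * deriv g y) x

noncomputable def Dplus (a : ℝ) (f : ℝ → ℝ) : ℝ → ℝ :=
  thetaOp^[⌊a⌋₊ + 1] (Lplus ((⌊a⌋₊ : ℝ) + 1 - a) f)

noncomputable def Dminus (a : ℝ) (f : ℝ → ℝ) : ℝ → ℝ :=
  thetaOp^[⌊a⌋₊ + 1] (Lminus ((⌊a⌋₊ : ℝ) + 1 - a) f)

noncomputable def mulHaarI (l : ℝ) : Measure ℝ :=
  (volume.restrict (Set.Ioo (0:ℝ) l)).withDensity fun x => ENNReal.ofReal x⁻¹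

noncomputable def nuNormI (l ν : ℝ) (p : ℝ≥0∞) (f : ℝ → ℝ) : ℝ≥0∞ :=
  eLpNorm (fun x => x ^ ν * f x) p (mulHaarI l)

def memLnuI (l ν : ℝ) (p : ℝ≥0∞) (f : ℝ → ℝ) : Prop :=
  MemLp (fun x => x ^ ν * f x) p (mulHaarI l)

noncomputable def LplusC (a : ℝ) (f : ℝ → ℂ) (x : ℝ) : ℂ :=
  ((Real.Gamma (2*a) : ℂ))⁻¹ *
    ∫ u in Set.Ioo (0:ℝ) x, (((x-u)^(2*a-1) * u^(-a) * Fg a (1 - x/u) : ℝ) : ℂ) * f u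

def memLnuIC (l ν : ℝ) (p : ℝ≥0∞) (f : ℝ → ℂ) : Prop :=
  MemLp (fun x => (x ^ ν : ℝ) • f x) p (mulHaarI l)

/-!
Substituting `u = x / t` writes `x^ν (L₀₊^α f)(x)` as `Γ(2α)⁻¹ ∫₁^∞ K(t) (x/t)^α g(x/t) dt`, where
`g(u) = u^ν f(u)` and `K` is the integrand of `C₊`. As `(x/t)^α ≤ l^α`, the operator is dominated by
an average of the dilates `g(·/t)` against the finite measure `Γ(2α)⁻¹ l^α K(t) dt` on `(1, ∞)`.
Dilations preserve `dx/x`, so by Jensen and Tonelli (and directly for `p = ∞`) such an average has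
`L^p(dx/x)` norm at most its total mass times `‖g‖_p`. The kernel is integrable because
`F_α(1 - u) = O((u - 1)^(-β))` for every `0 ≤ β < α`, and some such `β` exceeds `2α + ν - 1`.
-/

instance : SFinite mulHaar := by
  unfold mulHaar
  infer_instance

theorem lintegral_mulHaar_comp_div {t : ℝ} (ht : 0 < t) (ψ : ℝ → ℝ≥0∞) :
    ∫⁻ x, ψ (x / t) ∂mulHaar = ∫⁻ x, ψ x ∂mulHaar := by
  have hd : Measurable fun x : ℝ => ENNReal.ofReal x⁻¹ := measurable_inv.ennreal_ofReal
  simp only [mulHaar, lintegral_withDensity_eq_lintegral_mul_non_measurable _ hd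
    (ae_of_all _ fun _ => ENNReal.ofReal_lt_top), Pi.mul_apply]
  have hderiv : ∀ y ∈ Ioi (0:ℝ), HasDerivWithinAt (t * ·) t (Ioi 0) y := fun y _ => by
    simpa using ((hasDerivAt_id y).const_mul t).hasDerivWithinAt
  have himage : (t * ·) '' Ioi 0 = Ioi 0 := by simpa using image_mul_left_Ioi ht (0:ℝ)
  conv_lhs => rw [← himage, lintegral_image_eq_lintegral_abs_deriv_mul measurableSet_Ioi hderiv
    (mul_right_injective₀ ht.ne').injOn]
  refine setLIntegral_congr_fun measurableSet_Ioi fun y _ => ?_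
  rw [mul_div_cancel_left₀ y ht.ne', abs_of_pos ht, ← mul_assoc, ← ENNReal.ofReal_mul ht.le,
    mul_inv, mul_inv_cancel_left₀ ht.ne']

theorem measurePreserving_div_mulHaar {t : ℝ} (ht : 0 < t) :
    MeasurePreserving (fun x => x / t) mulHaar mulHaar := by
  refine ⟨measurable_div_const t, Measure.ext fun s hs => ?_⟩
  rw [Measure.map_apply (measurable_div_const t) hs, ← lintegral_indicator_one hs,
    ← lintegral_indicator_one (measurable_div_const t hs)]
  exact lintegral_mulHaar_comp_div ht (s.indicator 1)

theorem mulHaar_restrict_Ioo (l : ℝ) : mulHaar.restrict (Ioo 0 l) = mulHaarI l := by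
  rw [mulHaar, mulHaarI, restrict_withDensity measurableSet_Ioo,
    Measure.restrict_restrict measurableSet_Ioo, inter_eq_self_of_subset_left Ioo_subset_Ioi_self]

theorem volume_restrict_Ioo_absolutelyContinuous_mulHaarI (l : ℝ) :
    volume.restrict (Ioo 0 l) ≪ mulHaarI l := by
  refine withDensity_absolutelyContinuous' measurable_inv.ennreal_ofReal.aemeasurable ?_
  filter_upwards [ae_restrict_mem measurableSet_Ioo] with x hx
  simpa using hx.1

theorem lintegral_rpow_le_measure_univ_rpow_mul {X : Type*} [MeasurableSpace X] {θ : Measure X}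
    {ψ : X → ℝ≥0∞} (hψ : AEMeasurable ψ θ) {r : ℝ} (hr : 1 ≤ r) :
    (∫⁻ t, ψ t ∂θ) ^ r ≤ θ univ ^ (r - 1) * ∫⁻ t, ψ t ^ r ∂θ := by
  rcases hr.eq_or_lt with rfl | hr
  · simp
  have hr0 : 0 < r := one_pos.trans hr
  have hHolder := ENNReal.lintegral_mul_le_Lp_mul_Lq θ (Real.HolderConjugate.conjExponent hr) hψ
    aemeasurable_const (g := 1)
  simp only [Pi.mul_apply, Pi.one_apply, mul_one, ENNReal.one_rpow, lintegral_one] at hHolder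
  calc (∫⁻ t, ψ t ∂θ) ^ r
      ≤ ((∫⁻ t, ψ t ^ r ∂θ) ^ (1 / r) * θ univ ^ (1 / r.conjExponent)) ^ r := by gcongr
    _ = θ univ ^ (r - 1) * ∫⁻ t, ψ t ^ r ∂θ := by
      rw [Real.conjExponent, ENNReal.mul_rpow_of_nonneg _ _ hr0.le, ← ENNReal.rpow_mul,
        ← ENNReal.rpow_mul, one_div_mul_cancel hr0.ne', ENNReal.rpow_one, one_div_div,
        div_mul_cancel₀ _ hr0.ne',
        mul_comm]

theorem eLpNormEssSup_lintegral_comp_div_le {θ : Measure ℝ} [SFinite θ] (hθ : ∀ᵐ t ∂θ, 0 < t)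
    {g : ℝ → ℝ≥0∞} (hg : Measurable g) :
    eLpNormEssSup (fun x => ∫⁻ t, g (x / t) ∂θ) mulHaar ≤ θ univ * eLpNormEssSup g mulHaar := by
  set M := eLpNormEssSup g mulHaar
  have hgM : ∀ᵐ y ∂mulHaar, g y ≤ M := by
    simpa only [enorm_eq_self] using enorm_ae_le_eLpNormEssSup g mulHaar
  have hdilate : ∀ᵐ x ∂mulHaar, ∀ᵐ t ∂θ, g (x / t) ≤ M := by
    rw [Measure.ae_ae_comm (p := fun x t => g (x / t) ≤ M)
      (measurableSet_le (hg.comp (measurable_fst.div measurable_snd)) measurable_const)]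
    filter_upwards [hθ] with t ht
    exact (measurePreserving_div_mulHaar ht).quasiMeasurePreserving.ae (p := (g · ≤ M)) hgM
  refine eLpNormEssSup_le_of_ae_enorm_bound ?_
  filter_upwards [hdilate] with x hx
  calc ‖∫⁻ t, g (x / t) ∂θ‖ₑ = ∫⁻ t, g (x / t) ∂θ := enorm_eq_self _
    _ ≤ ∫⁻ _, M ∂θ := lintegral_mono_ae hx
    _ = θ univ * M := by rw [lintegral_const, mul_comm]

theorem lintegral_rpow_lintegral_comp_div_le {θ : Measure ℝ} [SFinite θ] (hθ : ∀ᵐ t ∂θ, 0 < t)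
    {g : ℝ → ℝ≥0∞} (hg : Measurable g) {r : ℝ} (hr : 1 ≤ r) :
    ∫⁻ x, (∫⁻ t, g (x / t) ∂θ) ^ r ∂mulHaar ≤ θ univ ^ r * ∫⁻ y, g y ^ r ∂mulHaar := by
  have hmeas : Measurable fun q : ℝ × ℝ => g (q.1 / q.2) ^ r :=
    (hg.comp (measurable_fst.div measurable_snd)).pow_const r
  calc ∫⁻ x, (∫⁻ t, g (x / t) ∂θ) ^ r ∂mulHaar
      ≤ ∫⁻ x, θ univ ^ (r - 1) * ∫⁻ t, g (x / t) ^ r ∂θ ∂mulHaar := by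
        gcongr with x
        exact lintegral_rpow_le_measure_univ_rpow_mul
          (hg.comp (measurable_const.div measurable_id)).aemeasurable hr
    _ = θ univ ^ (r - 1) * ∫⁻ t, ∫⁻ x, g (x / t) ^ r ∂mulHaar ∂θ := by
        rw [lintegral_const_mul _ hmeas.lintegral_prod_right',
          lintegral_lintegral_swap hmeas.aemeasurable]
    _ = θ univ ^ (r - 1) * ∫⁻ _, ∫⁻ y, g y ^ r ∂mulHaar ∂θ := by
        congr 1
        refine lintegral_congr_ae ?_
        filter_upwards [hθ] with t ht
        exact (measurePreserving_div_mulHaar ht).lintegral_comp (hg.pow_const r)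
    _ = θ univ ^ r * ∫⁻ y, g y ^ r ∂mulHaar := by
        have hpow : θ univ ^ (r - 1) * θ univ = θ univ ^ r := by
          nth_rw 2 [← ENNReal.rpow_one (θ univ)]
          rw [← ENNReal.rpow_add_of_nonneg _ _ (by linarith) zero_le_one, sub_add_cancel]
        rw [lintegral_const, mul_comm _ (θ univ), ← mul_assoc, hpow]

theorem eLpNorm_lintegral_comp_div_le {θ : Measure ℝ} [SFinite θ] (hθ : ∀ᵐ t ∂θ, 0 < t)
    {g : ℝ → ℝ≥0∞} (hg : Measurable g) {p : ℝ≥0∞} (hp : 1 ≤ p) :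
    eLpNorm (fun x => ∫⁻ t, g (x / t) ∂θ) p mulHaar ≤ θ univ * eLpNorm g p mulHaar := by
  rcases eq_or_ne p ∞ with rfl | hp_top
  · simpa only [eLpNorm_exponent_top] using eLpNormEssSup_lintegral_comp_div_le hθ hg
  have hr : 1 ≤ p.toReal := by simpa using ENNReal.toReal_mono hp_top hp
  have hr0 : 0 < p.toReal := one_pos.trans_le hr
  simp only [eLpNorm_eq_lintegral_rpow_enorm_toReal (one_pos.trans_le hp).ne' hp_top,
    enorm_eq_self]
  calc (∫⁻ x, (∫⁻ t, g (x / t) ∂θ) ^ p.toReal ∂mulHaar) ^ (1 / p.toReal)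
      ≤ (θ univ ^ p.toReal * ∫⁻ y, g y ^ p.toReal ∂mulHaar) ^ (1 / p.toReal) := by
        gcongr
        exact lintegral_rpow_lintegral_comp_div_le hθ hg hr
    _ = θ univ * (∫⁻ y, g y ^ p.toReal ∂mulHaar) ^ (1 / p.toReal) := by
        rw [ENNReal.mul_rpow_of_nonneg _ _ (by positivity), ← ENNReal.rpow_mul,
          mul_one_div_cancel hr0.ne', ENNReal.rpow_one]

theorem Fg_nonneg {a z : ℝ} (ha : 0 ≤ a) (hz : z ≤ 0) : 0 ≤ Fg a z := by
  refine mul_nonneg (div_nonneg (Real.Gamma_nonneg_of_nonneg (by linarith)) (sq_nonneg _)) ?_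
  refine intervalIntegral.integral_nonneg zero_le_one fun t ht => ?_
  have h1 : 0 ≤ 1 - t := by linarith [ht.2]
  have h2 : 0 ≤ 1 - z * t := by nlinarith [ht.1]
  exact mul_nonneg (mul_nonneg (Real.rpow_nonneg ht.1 _) (Real.rpow_nonneg h1 _))
    (Real.rpow_nonneg h2 _)

theorem measurable_Fg (a : ℝ) : Measurable (Fg a) := by
  have hF : Fg a = fun z => (Real.Gamma (2*a) / (Real.Gamma a)^2) *
      ∫ t in Ioc (0:ℝ) 1, t^(a-1) * (1-t)^(a-1) * (1 - z*t)^(-a) := by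
    ext z
    rw [Fg, intervalIntegral.integral_of_le zero_le_one]
  rw [hF]
  refine measurable_const.mul ?_
  have hmeas : Measurable fun q : ℝ × ℝ =>
      q.2 ^ (a-1) * (1-q.2) ^ (a-1) * (1 - q.1 * q.2) ^ (-a) := by
    fun_prop
  exact (hmeas.stronglyMeasurable.integral_prod_right' (ν := volume.restrict (Ioc 0 1))).measurable

theorem integrableOn_rpow_mul_one_sub_rpow {a b : ℝ} (ha : 0 < a) (hb : 0 < b) :
    IntegrableOn (fun t : ℝ => t ^ (a - 1) * (1 - t) ^ (b - 1)) (Ioc 0 1) := by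
  have h := (Complex.betaIntegral_convergent (u := a) (v := b) (by simpa) (by simpa)).norm
  rw [intervalIntegrable_iff_integrableOn_Ioc_of_le zero_le_one] at h
  refine h.congr_fun (fun t ht => ?_) measurableSet_Ioc
  have ht1 : 0 ≤ 1 - t := by linarith [ht.2]
  have hcast : ((a : ℂ) - 1) = ((a - 1 : ℝ) : ℂ) ∧ ((b : ℂ) - 1) = ((b - 1 : ℝ) : ℂ) ∧
      1 - (t : ℂ) = ((1 - t : ℝ) : ℂ) := by
    push_cast
    simp
  simp only [hcast, ← Complex.ofReal_cpow ht.1.le, ← Complex.ofReal_cpow ht1,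
    ← Complex.ofReal_mul, Complex.norm_real, Real.norm_eq_abs]
  exact abs_of_nonneg (mul_nonneg (Real.rpow_nonneg ht.1.le _) (Real.rpow_nonneg ht1 _))

theorem exists_Fg_one_sub_le_rpow {a b : ℝ} (hb : 0 ≤ b) (hba : b < a) :
    ∃ C, ∀ u, 1 < u → Fg a (1 - u) ≤ C * (u - 1) ^ (-b) := by
  have ha : 0 < a := hb.trans_lt hba
  set c := Real.Gamma (2*a) / (Real.Gamma a)^2
  have hc : 0 ≤ c := div_nonneg (Real.Gamma_nonneg_of_nonneg (by linarith)) (sq_nonneg _)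
  have hbeta : IntegrableOn (fun t : ℝ => t ^ (a - b - 1) * (1 - t) ^ (a - 1)) (Ioc 0 1) := by
    simpa [sub_sub] using integrableOn_rpow_mul_one_sub_rpow (sub_pos.2 hba) ha
  refine ⟨c * ∫ t in Ioc (0:ℝ) 1, t ^ (a - b - 1) * (1 - t) ^ (a - 1), fun u hu => ?_⟩
  have hu1 : 0 < u - 1 := sub_pos.2 hu
  have hbound : ∀ t ∈ Ioc (0:ℝ) 1, t ^ (a-1) * (1-t) ^ (a-1) * (1 - (1-u)*t) ^ (-a)
      ≤ (u-1) ^ (-b) * (t ^ (a-b-1) * (1-t) ^ (a-1)) := by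
    intro t ⟨ht0, ht1⟩
    have hs : 0 < (u-1) * t := mul_pos hu1 ht0
    have hdecay : (1 + (u-1)*t) ^ (-a) ≤ ((u-1)*t) ^ (-b) :=
      calc (1 + (u-1)*t) ^ (-a) ≤ (1 + (u-1)*t) ^ (-b) :=
            Real.rpow_le_rpow_of_exponent_le (by linarith) (by linarith)
        _ ≤ ((u-1)*t) ^ (-b) := Real.rpow_le_rpow_of_nonpos hs (by linarith) (by linarith)
    have h1t : 0 ≤ 1 - t := by linarith
    calc t ^ (a-1) * (1-t) ^ (a-1) * (1 - (1-u)*t) ^ (-a)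
        ≤ t ^ (a-1) * (1-t) ^ (a-1) * ((u-1) ^ (-b) * t ^ (-b)) := by
          rw [show 1 - (1-u)*t = 1 + (u-1)*t by ring, ← Real.mul_rpow hu1.le ht0.le]
          gcongr
      _ = (u-1) ^ (-b) * (t ^ (a-b-1) * (1-t) ^ (a-1)) := by
          rw [show a - b - 1 = (a - 1) + -b by ring, Real.rpow_add ht0]
          ring
  have hint : IntegrableOn (fun t : ℝ => t ^ (a-1) * (1-t) ^ (a-1) * (1 - (1-u)*t) ^ (-a))
      (Ioc 0 1) := by
    refine (hbeta.const_mul ((u-1) ^ (-b))).mono' (by fun_prop) ?_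
    filter_upwards [ae_restrict_mem measurableSet_Ioc] with t ht
    have h1t : 0 ≤ 1 - t := by linarith [ht.2]
    have h2 : 0 ≤ 1 - (1-u)*t := by nlinarith [ht.1]
    rw [Real.norm_of_nonneg (mul_nonneg (mul_nonneg (Real.rpow_nonneg ht.1.le _)
      (Real.rpow_nonneg h1t _)) (Real.rpow_nonneg h2 _))]
    exact hbound t ht
  calc Fg a (1 - u) ≤ c * ((u-1) ^ (-b) * ∫ t in Ioc (0:ℝ) 1, t ^ (a-b-1) * (1-t) ^ (a-1)) := by
        rw [Fg, intervalIntegral.integral_of_le zero_le_one]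
        refine mul_le_mul_of_nonneg_left ?_ hc
        rw [← integral_const_mul]
        exact setIntegral_mono_on hint (hbeta.const_mul _) measurableSet_Ioc hbound
    _ = _ := by ring

theorem integrableOn_Ioi_one_rpow_sub_one_mul_rpow {a b : ℝ} (ha : -1 < a) (hab : a + b < -1) :
    IntegrableOn (fun u : ℝ => (u - 1) ^ a * u ^ b) (Ioi 1) := by
  have hmeas : AEStronglyMeasurable (fun u : ℝ => (u - 1) ^ a * u ^ b) := by fun_prop
  rw [← Ioc_union_Ioi_eq_Ioi one_le_two]
  refine IntegrableOn.union ?_ ?_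
  · have hsing : IntegrableOn (fun u : ℝ => (u - 1) ^ a) (Ioc 1 2) := by
      have h := (intervalIntegral.intervalIntegrable_rpow' ha (a := 0) (b := 1)).comp_sub_right 1
      rw [intervalIntegrable_iff_integrableOn_Ioc_of_le (by norm_num)] at h
      norm_num at h
      exact h
    refine (hsing.mul_const (max 1 (2 ^ b))).mono' hmeas.restrict ?_
    filter_upwards [ae_restrict_mem measurableSet_Ioc] with u ⟨hu1, hu2⟩
    have hu0 : 0 < u := one_pos.trans hu1
    rw [Real.norm_of_nonneg (by have := hu1.le; positivity)]
    gcongr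
    rcases le_or_gt 0 b with hb | hb
    · exact (Real.rpow_le_rpow hu0.le hu2 hb).trans (le_max_right _ _)
    · exact (Real.rpow_le_one_of_one_le_of_nonpos hu1.le hb.le).trans (le_max_left _ _)
  · refine ((integrableOn_Ioi_rpow_of_lt hab two_pos).const_mul (max 1 (2 ^ (-a)))).mono'
      hmeas.restrict ?_
    filter_upwards [ae_restrict_mem measurableSet_Ioi] with u (hu : 2 < u)
    have hu0 : 0 < u := two_pos.trans hu
    have hu1 : 0 ≤ u - 1 := by linarith
    rw [Real.norm_of_nonneg (by positivity), Real.rpow_add hu0, ← mul_assoc]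
    gcongr
    rcases le_or_gt 0 a with ha0 | ha0
    · calc (u - 1) ^ a ≤ u ^ a := Real.rpow_le_rpow (by linarith) (by linarith) ha0
        _ ≤ _ := le_mul_of_one_le_left (by positivity) (le_max_left _ _)
    · calc (u - 1) ^ a ≤ (u / 2) ^ a :=
            Real.rpow_le_rpow_of_nonpos (by positivity) (by linarith) ha0.le
        _ = 2 ^ (-a) * u ^ a := by
          rw [Real.div_rpow hu0.le zero_le_two, Real.rpow_neg zero_le_two, div_eq_inv_mul]
        _ ≤ _ := by gcongr; exact le_max_right _ _

noncomputable def laguerreKernel (α ν u : ℝ) : ℝ := (u - 1) ^ (2*α - 1) * u ^ (ν - 1) * Fg α (1 - u)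

theorem measurable_laguerreKernel (α ν : ℝ) : Measurable (laguerreKernel α ν) := by
  have := measurable_Fg α
  unfold laguerreKernel
  fun_prop

theorem laguerreKernel_nonneg {α ν u : ℝ} (hα : 0 ≤ α) (hu : 1 ≤ u) : 0 ≤ laguerreKernel α ν u :=
  mul_nonneg (mul_nonneg (Real.rpow_nonneg (sub_nonneg.2 hu) _)
    (Real.rpow_nonneg (zero_le_one.trans hu) _)) (Fg_nonneg hα (sub_nonpos.2 hu))

theorem integrableOn_laguerreKernel {α ν : ℝ} (hα : 0 < α) (hαν : α + ν < 1) :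
    IntegrableOn (laguerreKernel α ν) (Ioi 1) := by
  set β := max (α / 2) ((3*α + ν - 1) / 2)
  have hβα : β < α := max_lt (by linarith) (by linarith)
  obtain ⟨C, hC⟩ := exists_Fg_one_sub_le_rpow ((by positivity : 0 ≤ α / 2).trans
    (le_max_left _ _)) hβα
  have hmajor := (integrableOn_Ioi_one_rpow_sub_one_mul_rpow (a := 2*α - 1 - β) (b := ν - 1)
    (by linarith) (by linarith [le_max_right (α / 2) ((3*α + ν - 1) / 2)])).const_mul C
  refine hmajor.mono' (measurable_laguerreKernel α ν).aestronglyMeasurable ?_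
  filter_upwards [ae_restrict_mem measurableSet_Ioi] with u (hu : 1 < u)
  have hu1 : 0 < u - 1 := sub_pos.2 hu
  rw [Real.norm_of_nonneg (laguerreKernel_nonneg hα.le hu.le), laguerreKernel,
    sub_eq_add_neg (2*α - 1), Real.rpow_add hu1]
  calc (u - 1) ^ (2*α - 1) * u ^ (ν - 1) * Fg α (1 - u)
      ≤ (u - 1) ^ (2*α - 1) * u ^ (ν - 1) * (C * (u - 1) ^ (-β)) := by
        gcongr
        exact hC u hu
    _ = C * ((u - 1) ^ (2*α - 1) * (u - 1) ^ (-β) * u ^ (ν - 1)) := by ring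

theorem lintegral_Ioo_zero_eq_lintegral_Ioi_one {x : ℝ} (hx : 0 < x) (g : ℝ → ℝ≥0∞) :
    ∫⁻ u in Ioo 0 x, g u = ∫⁻ t in Ioi 1, ENNReal.ofReal (x / t ^ 2) * g (x / t) := by
  have himage : (x / ·) '' Ioi 1 = Ioo 0 x := by
    ext u
    refine ⟨?_, fun ⟨hu0, hux⟩ => ⟨x / u, (one_lt_div hu0).2 hux, div_div_cancel₀ hx.ne'⟩⟩
    rintro ⟨t, ht, rfl⟩
    exact ⟨div_pos hx (one_pos.trans ht), div_lt_self hx ht⟩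
  have hderiv : ∀ t ∈ Ioi (1:ℝ), HasDerivWithinAt (x / ·) (-(x / t ^ 2)) (Ioi 1) t := by
    intro t ht
    simpa [div_eq_mul_inv] using
      ((hasDerivAt_inv (one_pos.trans ht).ne').const_mul x).hasDerivWithinAt
  have hinj : InjOn (x / ·) (Ioi (1:ℝ)) := fun a ha b hb h => by
    simpa [div_eq_mul_inv, hx.ne'] using h
  rw [← himage, lintegral_image_eq_lintegral_abs_deriv_mul measurableSet_Ioi hderiv hinj]
  refine setLIntegral_congr_fun measurableSet_Ioi fun t _ => ?_
  rw [abs_neg, abs_of_nonneg (by positivity)]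

theorem Lplus_integrand_comp_div {α ν x t : ℝ} (hx : 0 < x) (ht : 1 < t) :
    x / t ^ 2 * (x ^ ν * (x - x / t) ^ (2*α - 1) * (x / t) ^ (-α) * Fg α (1 - x / (x / t)) *
      (x / t) ^ (-ν)) = laguerreKernel α ν t * (x / t) ^ α := by
  have ht0 : 0 < t := one_pos.trans ht
  set u := x / t with hu
  have hu0 : 0 < u := div_pos hx ht0
  have hxu : x = u * t := by rw [hu, div_mul_cancel₀ x ht0.ne']
  have ht1 : 0 < t - 1 := sub_pos.2 ht
  have hscalar : u / t * (u * t) ^ ν * (u * (t - 1)) ^ (2*α - 1) * u ^ (-α) * u ^ (-ν)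
      = (t - 1) ^ (2*α - 1) * t ^ (ν - 1) * u ^ α := by
    rw [Real.mul_rpow hu0.le ht0.le, Real.mul_rpow hu0.le ht1.le,
      show u / t = Real.exp (Real.log u - Real.log t) by
        rw [Real.exp_sub, Real.exp_log hu0, Real.exp_log ht0]]
    simp only [Real.rpow_def_of_pos hu0, Real.rpow_def_of_pos ht0, Real.rpow_def_of_pos ht1,
      ← Real.exp_add]
    rw [Real.exp_eq_exp]
    ring
  rw [div_div_cancel₀ hx.ne', hxu, laguerreKernel,
    show u * t / t ^ 2 = u / t by field_simp, show u * t - u = u * (t - 1) by ring]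
  linear_combination Fg α (1 - t) * hscalar

theorem enorm_rpow_mul_Lplus_le {α ν x : ℝ} (hα : 0 < α) (hx : 0 < x) {f : ℝ → ℝ}
    {G : ℝ → ℝ≥0∞} (hG : ∀ᵐ u ∂volume.restrict (Ioo 0 x), ‖u ^ ν * f u‖ₑ = G u) :
    ‖x ^ ν * Lplus α f x‖ₑ ≤ ∫⁻ t in Ioi 1,
      ENNReal.ofReal ((Real.Gamma (2*α))⁻¹ * (laguerreKernel α ν t * (x / t) ^ α)) * G (x / t) := by
  set c := (Real.Gamma (2*α))⁻¹
  have hc : 0 ≤ c := inv_nonneg.2 (Real.Gamma_nonneg_of_nonneg (by linarith))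
  set k : ℝ → ℝ := fun u =>
    x ^ ν * (x - u) ^ (2*α - 1) * u ^ (-α) * Fg α (1 - x / u) * u ^ (-ν)
  have hk : ∀ u ∈ Ioo 0 x, 0 ≤ k u := fun u ⟨hu0, hux⟩ => by
    have : 0 ≤ Fg α (1 - x / u) :=
      Fg_nonneg hα.le (by rw [sub_nonpos, one_le_div hu0]; exact hux.le)
    have : 0 ≤ x - u := by linarith
    positivity
  calc ‖x ^ ν * Lplus α f x‖ₑ = ‖c * ∫ u in Ioo 0 x, k u * (u ^ ν * f u)‖ₑ := by
        rw [Lplus, mul_left_comm, ← integral_const_mul]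
        congr 2
        refine setIntegral_congr_fun measurableSet_Ioo fun u ⟨hu0, _⟩ => ?_
        simp only [k, Real.rpow_neg hu0.le]
        field_simp
    _ ≤ ‖c‖ₑ * ∫⁻ u in Ioo 0 x, ‖k u * (u ^ ν * f u)‖ₑ := by
        rw [enorm_mul]
        gcongr
        exact enorm_integral_le_lintegral_enorm _
    _ = ‖c‖ₑ * ∫⁻ u in Ioo 0 x, ENNReal.ofReal (k u) * G u := by
        congr 1
        refine lintegral_congr_ae ?_
        filter_upwards [hG, ae_restrict_mem measurableSet_Ioo] with u hGu hu
        rw [enorm_mul, hGu, Real.enorm_of_nonneg (hk u hu)]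
    _ = ∫⁻ t in Ioi 1, ENNReal.ofReal (c * (laguerreKernel α ν t * (x / t) ^ α)) * G (x / t) := by
        rw [lintegral_Ioo_zero_eq_lintegral_Ioi_one hx, ← lintegral_const_mul' _ _ enorm_ne_top]
        refine setLIntegral_congr_fun measurableSet_Ioi fun t (ht : 1 < t) => ?_
        have hjac : 0 ≤ x / t ^ 2 := by positivity
        rw [← Lplus_integrand_comp_div hx ht, Real.enorm_of_nonneg hc, ← mul_assoc,
          ← ENNReal.ofReal_mul hc, ← mul_assoc, ← ENNReal.ofReal_mul (mul_nonneg hc hjac),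
          mul_assoc c]

theorem exists_measurable_extension_enorm_rpow_mul {l ν : ℝ} {p : ℝ≥0∞} {f : ℝ → ℝ}
    (hf : AEStronglyMeasurable (fun x => x ^ ν * f x) (mulHaarI l)) :
    ∃ G : ℝ → ℝ≥0∞, Measurable G ∧
      (∀ᵐ u ∂volume.restrict (Ioo 0 l), ‖u ^ ν * f u‖ₑ = G u) ∧
      eLpNorm G p mulHaar = nuNormI l ν p f := by
  have hmeas := hf.enorm
  refine ⟨(Ioo 0 l).indicator (hmeas.mk _), hmeas.measurable_mk.indicator measurableSet_Ioo,
    ?_, ?_⟩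
  · filter_upwards [(volume_restrict_Ioo_absolutelyContinuous_mulHaarI l).ae_le hmeas.ae_eq_mk,
      ae_restrict_mem measurableSet_Ioo] with u hu hmem
    rw [indicator_of_mem hmem, hu]
  · rw [eLpNorm_indicator_eq_eLpNorm_restrict measurableSet_Ioo, mulHaar_restrict_Ioo, nuNormI,
      ← eLpNorm_enorm]
    exact eLpNorm_congr_ae hmeas.ae_eq_mk.symm

noncomputable def laguerreMeasure (α ν l : ℝ) : Measure ℝ :=
  (volume.restrict (Ioi 1)).withDensity
    fun t => ENNReal.ofReal ((Real.Gamma (2*α))⁻¹ * (laguerreKernel α ν t * l ^ α))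

instance (α ν l : ℝ) : SFinite (laguerreMeasure α ν l) := by
  unfold laguerreMeasure
  infer_instance

theorem ae_pos_laguerreMeasure (α ν l : ℝ) : ∀ᵐ t ∂laguerreMeasure α ν l, 0 < t :=
  withDensity_absolutelyContinuous _ _ |>.ae_le <|
    (ae_restrict_mem measurableSet_Ioi).mono fun t (ht : 1 < t) => one_pos.trans ht

theorem laguerreMeasure_univ {α ν l : ℝ} (hl : 0 < l) (hα : 0 < α) (hαν : α + ν < 1) :
    laguerreMeasure α ν l univ =
      ENNReal.ofReal (((Real.Gamma (2*α))⁻¹ * ∫ u in Ioi (1:ℝ), laguerreKernel α ν u) * l ^ α) := by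
  have hw : ∀ t ∈ Ioi (1:ℝ), 0 ≤ (Real.Gamma (2*α))⁻¹ * (laguerreKernel α ν t * l ^ α) :=
    fun t (ht : 1 < t) => mul_nonneg (inv_nonneg.2 (Real.Gamma_nonneg_of_nonneg (by linarith)))
      (mul_nonneg (laguerreKernel_nonneg hα.le ht.le) (Real.rpow_nonneg hl.le α))
  rw [laguerreMeasure, withDensity_apply _ MeasurableSet.univ, Measure.restrict_univ,
    ← ofReal_integral_eq_lintegral_ofReal
      (((integrableOn_laguerreKernel hα hαν).mul_const _).const_mul _)
      (ae_restrict_of_forall_mem measurableSet_Ioi hw),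
    integral_const_mul, integral_mul_const, mul_assoc]

theorem enorm_rpow_mul_Lplus_le_lintegral_laguerreMeasure {α ν l x : ℝ} (hα : 0 < α)
    (hx : x ∈ Ioo 0 l) {f : ℝ → ℝ} {G : ℝ → ℝ≥0∞}
    (hG : ∀ᵐ u ∂volume.restrict (Ioo 0 l), ‖u ^ ν * f u‖ₑ = G u) :
    ‖x ^ ν * Lplus α f x‖ₑ ≤ ∫⁻ t, G (x / t) ∂laguerreMeasure α ν l := by
  rw [laguerreMeasure, lintegral_withDensity_eq_lintegral_mul_non_measurable _
    (((measurable_laguerreKernel α ν).mul_const _).const_mul _).ennreal_ofReal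
    (ae_of_all _ fun _ => ENNReal.ofReal_lt_top)]
  refine (enorm_rpow_mul_Lplus_le hα hx.1 (ae_restrict_of_ae_restrict_of_subset
    (Ioo_subset_Ioo_right hx.2.le) hG)).trans
    (setLIntegral_mono' measurableSet_Ioi fun t (ht : 1 < t) => ?_)
  have hxt : (x / t) ^ α ≤ l ^ α :=
    Real.rpow_le_rpow (div_pos hx.1 (one_pos.trans ht)).le
      ((div_le_self hx.1.le ht.le).trans hx.2.le) hα.le
  have hc := inv_nonneg.2 (Real.Gamma_nonneg_of_nonneg (by linarith : 0 ≤ 2 * α))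
  exact mul_le_mul_left (ENNReal.ofReal_le_ofReal (mul_le_mul_of_nonneg_left
    (mul_le_mul_of_nonneg_left hxt (laguerreKernel_nonneg hα.le ht.le)) hc)) _

/-- Boundedness of the left-sided Laguerre fractional integral on `L_{ν,p}(0,l)`. -/
theorem stmt19 (l : ℝ) (hl : 0 < l) (α ν : ℝ) (hα : 0 < α) (hαν : α + ν < 1)
    (p : ℝ≥0∞) (hp : 1 ≤ p) :
    IntegrableOn (fun u => (u-1)^(2*α-1) * u^(ν-1) * Fg α (1-u)) (Set.Ioi 1) volume ∧
    ∀ f : ℝ → ℝ, memLnuI l ν p f →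
      nuNormI l ν p (Lplus α f) ≤
        ENNReal.ofReal (((Real.Gamma (2*α))⁻¹ *
          ∫ u in Set.Ioi (1:ℝ), (u-1)^(2*α-1) * u^(ν-1) * Fg α (1-u)) * l^α) *
        nuNormI l ν p f := by
  refine ⟨integrableOn_laguerreKernel hα hαν, fun f hf => ?_⟩
  obtain ⟨G, hGm, hG, hGnorm⟩ := exists_measurable_extension_enorm_rpow_mul (p := p) hf.1
  set θ := laguerreMeasure α ν l
  have hpointwise : ∀ᵐ x ∂mulHaarI l, ‖x ^ ν * Lplus α f x‖ₑ ≤ ‖∫⁻ t, G (x / t) ∂θ‖ₑ := by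
    rw [← mulHaar_restrict_Ioo]
    filter_upwards [ae_restrict_mem measurableSet_Ioo] with x hx
    exact (enorm_rpow_mul_Lplus_le_lintegral_laguerreMeasure hα hx hG).trans_eq
      (enorm_eq_self _).symm
  calc nuNormI l ν p (Lplus α f)
      ≤ eLpNorm (fun x => ∫⁻ t, G (x / t) ∂θ) p (mulHaarI l) := eLpNorm_mono_enorm_ae hpointwise
    _ ≤ eLpNorm (fun x => ∫⁻ t, G (x / t) ∂θ) p mulHaar :=
      eLpNorm_mono_measure _ (mulHaar_restrict_Ioo l ▸ Measure.restrict_le_self)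
    _ ≤ θ univ * eLpNorm G p mulHaar :=
      eLpNorm_lintegral_comp_div_le (ae_pos_laguerreMeasure α ν l) hGm hp
    _ = _ := by rw [laguerreMeasure_univ hl hα hαν, hGnorm]; rfl
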